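/- Let L be a unimodular subgroup of ℤ^n. Then every closed face F_u (u ∈ ℝL) of the arrangement H_L is a lattice translate of a standard box: there exist v ∈ L and vectors a, b ∈ {0,1}^n with disjoint supports such that F_u = v + {x ∈ ℝL : −b_i ≤ x_i ≤ a_i for all i}. -/

import Mathlib

/-- A sublattice `L ⊆ ℤ^ι` is *unimodular* if it is the image of an injective linear map given
by an integer matrix `B` with linearly independent columns, all of whose maximal minors lie in
`{0, 1, -1}`. -/
def IsUnimodular {ι : Type*} [Fintype ι] (L : Submodule ℤ (ι → ℤ)) : Prop :=
  ∃ (m : ℕ) (B : Matrix ι (Fin m) ℤ),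
    LinearIndependent ℤ B.transpose ∧
    (∀ r : Fin m ↪ ι, (B.submatrix r id).det ∈ ({0, 1, -1} : Set ℤ)) ∧
    L = LinearMap.range B.mulVecLin

/-- The canonical map `ℤ^n → ℝ^n`. -/
def intCastVec {n : ℕ} (v : Fin n → ℤ) : Fin n → ℝ := fun i => (v i : ℝ)

/-- `ℝL`, the real span of a lattice `L ⊆ ℤ^n` inside `ℝ^n`. -/
def realSpan {n : ℕ} (L : Submodule ℤ (Fin n → ℤ)) : Submodule ℝ (Fin n → ℝ) :=
  Submodule.span ℝ (intCastVec '' (L : Set (Fin n → ℤ)))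

/-- The closed face `F_u = {x ∈ ℝL : ⌊u_i⌋ ≤ x_i ≤ ⌈u_i⌉ for all i}` of the arrangement `H_L`
determined by a point `u`. -/
def closedFace {n : ℕ} (L : Submodule ℤ (Fin n → ℤ)) (u : Fin n → ℝ) : Set (Fin n → ℝ) :=
  {x | x ∈ realSpan L ∧ ∀ i, (⌊u i⌋ : ℝ) ≤ x i ∧ x i ≤ (⌈u i⌉ : ℝ)}

/-! The face `F_u = ℝL ∩ [⌊u⌋, ⌈u⌉]` is a nonempty compact convex set, so it has an extreme
point `z = B y`. The coordinates at which `z` touches the boundary of the box determine `y`, so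
`m` of them select a square submatrix `D` of `B` with `D y` integral; unimodularity makes
`det D = ±1`, hence `y` and `z` are integral. Translating by the lattice point `z` turns
`[⌊u⌋, ⌈u⌉]` into `[-b, a]` with `a = ⌈u⌉ - z` and `b = z - ⌊u⌋`. -/

open Matrix Set Filter Topology

theorem realSpan_range_mulVecLin {n m : ℕ} (B : Matrix (Fin n) (Fin m) ℤ) :
    realSpan (LinearMap.range B.mulVecLin) =
      LinearMap.range (B.map (Int.cast : ℤ → ℝ)).mulVecLin := by
  let castLin : (Fin n → ℤ) →ₗ[ℤ] Fin n → ℝ :=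
    LinearMap.compLeft (Int.castAddHom ℝ).toIntLinearMap _
  have himage : intCastVec '' (LinearMap.range B.mulVecLin : Set (Fin n → ℤ)) =
      Submodule.map castLin (Submodule.span ℤ (Set.range B.col)) := by
    rw [range_mulVecLin]; rfl
  rw [realSpan, himage, Submodule.map_span, Submodule.span_span_of_tower, range_mulVecLin,
    ← Set.range_comp]
  rfl

theorem injective_mulVec_map_intCast {ι : Type*} [Fintype ι] {m : ℕ} (B : Matrix ι (Fin m) ℤ)
    (hB : LinearIndependent ℤ Bᵀ) : Function.Injective (B.map (Int.cast : ℤ → ℝ)).mulVec := by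
  have hcol : (B.map (Int.cast : ℤ → ℝ)).col = fun j => algebraMap ℤ ℝ ∘ Bᵀ j := by
    ext j i; simp
  rw [mulVec_injective_iff, hcol]
  exact linearIndependent_algebraMap_comp_iff.2 hB

theorem Matrix.exists_isUnit_submatrix_of_injective_mulVec {κ n K : Type*} [Finite κ] [Fintype n]
    [DecidableEq n] [Field K] (M : Matrix κ n K) (hM : Function.Injective M.mulVec) :
    ∃ r : n ↪ κ, IsUnit (M.submatrix r id) := by
  have hspan : Submodule.span K (Set.range M.row) = ⊤ := by
    apply Submodule.eq_top_of_finrank_eq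
    rw [← rank_eq_finrank_span_row, rank, LinearMap.finrank_range_of_inj hM]
  obtain ⟨ι', a, ha, hspan', hli⟩ := exists_linearIndependent' K M.row
  let e : n ≃ ι' := (Pi.basisFun K n).indexEquiv (.mk hli (by rw [hspan', hspan]))
  exact ⟨⟨a ∘ e, ha.comp e.injective⟩, linearIndependent_rows_iff_isUnit.1 (hli.comp e e.injective)⟩

theorem Matrix.eq_comp_nonsing_inv_mulVec {n R S : Type*} [Fintype n] [DecidableEq n] [CommRing R]
    [CommRing S] (f : R →+* S) {D : Matrix n n R} (hD : IsUnit D.det) {y : n → S} {c : n → R}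
    (h : D.map f *ᵥ y = f ∘ c) : y = f ∘ (D⁻¹ *ᵥ c) := by
  funext i
  calc y i = ((D⁻¹ * D).map f *ᵥ y) i := by simp [nonsing_inv_mul D hD]
    _ = (D⁻¹.map f *ᵥ (f ∘ c)) i := by rw [Matrix.map_mul, ← mulVec_mulVec, h]
    _ = f ((D⁻¹ *ᵥ c) i) := (RingHom.map_mulVec f _ c i).symm

theorem eq_zero_of_mem_extremePoints_inter_Icc {ι : Type*} [Fintype ι] {W : Submodule ℝ (ι → ℝ)}
    {lo hi z d : ι → ℝ} (hz : z ∈ ((W : Set (ι → ℝ)) ∩ Icc lo hi).extremePoints ℝ) (hd : d ∈ W)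
    (hdz : ∀ i, z i = lo i ∨ z i = hi i → d i = 0) : d = 0 := by
  obtain ⟨⟨hzW, hzlo, hzhi⟩, hzext⟩ := mem_extremePoints.1 hz
  have hnear : ∀ᶠ t in 𝓝 (0 : ℝ), ∀ i, lo i ≤ z i + t * d i ∧ z i + t * d i ≤ hi i := by
    refine eventually_all.2 fun i => ?_
    by_cases htight : z i = lo i ∨ z i = hi i
    · simp [hdz i htight, hzlo i, hzhi i]
    · push Not at htight
      have hIoo : Ioo (lo i) (hi i) ∈ 𝓝 (z i + 0 * d i) := by
        rw [zero_mul, add_zero]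
        exact Ioo_mem_nhds ((hzlo i).lt_of_ne' htight.1) ((hzhi i).lt_of_ne htight.2)
      have hcont : Continuous fun t : ℝ => z i + t * d i := by fun_prop
      exact ((hcont.tendsto 0).eventually_mem hIoo).mono fun t ht => ⟨ht.1.le, ht.2.le⟩
  obtain ⟨ε, hε, hball⟩ := Metric.eventually_nhds_iff.1 hnear
  have hmem : ∀ t : ℝ, |t| < ε → z + t • d ∈ (W : Set (ι → ℝ)) ∩ Icc lo hi := fun t ht =>
    ⟨W.add_mem hzW (W.smul_mem t hd), fun i => (hball (by simpa using ht) i).1,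
      fun i => (hball (by simpa using ht) i).2⟩
  have hsmall : |ε / 2| < ε := by rw [abs_of_pos (half_pos hε)]; exact half_lt_self hε
  have hseg : z ∈ openSegment ℝ (z + (-(ε / 2)) • d) (z + (ε / 2) • d) :=
    ⟨1 / 2, 1 / 2, by norm_num, by norm_num, by norm_num, by module⟩
  have hfix : z + (ε / 2) • d = z :=
    (hzext _ (hmem _ (by rwa [abs_neg])) _ (hmem _ hsmall) hseg).2
  exact (smul_eq_zero.1 (add_eq_left.1 hfix)).resolve_left (half_pos hε).ne'

theorem closedFace_eq_inter_Icc {n : ℕ} (L : Submodule ℤ (Fin n → ℤ)) (u : Fin n → ℝ) :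
    closedFace L u =
      (realSpan L : Set (Fin n → ℝ)) ∩ Icc (fun i => (⌊u i⌋ : ℝ)) (fun i => ⌈u i⌉) := by
  ext x
  simp [closedFace, Pi.le_def, forall_and]

theorem exists_intCast_eq_of_tight_rows {ι : Type*} [Fintype ι] {m : ℕ} (B : Matrix ι (Fin m) ℤ)
    (hminors : ∀ r : Fin m ↪ ι, (B.submatrix r id).det ∈ ({0, 1, -1} : Set ℤ)) (T : Set ι)
    (y : Fin m → ℝ) (hint : ∀ i ∈ T, ∃ c : ℤ, (B.map (Int.cast : ℤ → ℝ) *ᵥ y) i = c)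
    (hT : ∀ y' : Fin m → ℝ, (∀ i ∈ T, (B.map (Int.cast : ℤ → ℝ) *ᵥ y') i = 0) → y' = 0) :
    ∃ w : Fin m → ℤ, y = Int.cast ∘ w := by
  set BT := (B.map (Int.cast : ℤ → ℝ)).submatrix ((↑) : T → ι) id
  have hinj : Function.Injective BT.mulVec :=
    (injective_iff_map_eq_zero BT.mulVecLin).2 fun y' hy' =>
      hT y' fun i hi => congrFun hy' ⟨i, hi⟩
  obtain ⟨r, hr⟩ := BT.exists_isUnit_submatrix_of_injective_mulVec hinj
  set r' : Fin m ↪ ι := r.trans (Function.Embedding.subtype _)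
  set D := B.submatrix r' id
  have hDunit : IsUnit D.det := by
    have hDreal : (D.det : ℝ) ≠ 0 := by
      have hcast : (D.det : ℝ) = (BT.submatrix r id).det := (Int.castRingHom ℝ).map_det D
      rw [hcast]
      exact ((isUnit_iff_isUnit_det _).1 hr).ne_zero
    rcases hminors r' with h | h | h
    · exact absurd (by rw [h, Int.cast_zero]) hDreal
    · exact h ▸ isUnit_one
    · exact h ▸ isUnit_one.neg
  choose c hc using fun k => hint (r k) (r k).2
  exact ⟨D⁻¹ *ᵥ c, D.eq_comp_nonsing_inv_mulVec (Int.castRingHom ℝ) hDunit (funext hc)⟩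

theorem exists_mem_closedFace_of_isUnimodular {n : ℕ} {L : Submodule ℤ (Fin n → ℤ)}
    (hL : IsUnimodular L) {u : Fin n → ℝ} (hu : u ∈ realSpan L) :
    ∃ v ∈ L, intCastVec v ∈ closedFace L u := by
  obtain ⟨m, B, hB, hminors, rfl⟩ := hL
  have hface := closedFace_eq_inter_Icc (LinearMap.range B.mulVecLin) u
  have hcompact : IsCompact (closedFace (LinearMap.range B.mulVecLin) u) := by
    rw [hface]; exact isCompact_Icc.inter_left (Submodule.closed_of_finiteDimensional _)
  obtain ⟨z, hz⟩ := hcompact.extremePoints_nonempty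
    ⟨u, hu, fun i => ⟨Int.floor_le _, Int.le_ceil _⟩⟩
  have hzface := hz.1
  rw [hface, realSpan_range_mulVecLin] at hz
  obtain ⟨y, rfl⟩ := hz.1.1
  set BR := B.map (Int.cast : ℤ → ℝ)
  let T : Set (Fin n) := {i | (BR *ᵥ y) i = ⌊u i⌋ ∨ (BR *ᵥ y) i = ⌈u i⌉}
  have hint : ∀ i ∈ T, ∃ c : ℤ, (BR *ᵥ y) i = c := fun i hi => hi.elim (⟨_, ·⟩) (⟨_, ·⟩)
  have hT : ∀ y', (∀ i ∈ T, (BR *ᵥ y') i = 0) → y' = 0 := fun y' hy' =>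
    injective_mulVec_map_intCast B hB <| by
      rw [mulVec_zero]
      exact eq_zero_of_mem_extremePoints_inter_Icc hz ⟨y', rfl⟩ hy'
  obtain ⟨w, rfl⟩ := exists_intCast_eq_of_tight_rows B hminors T y hint hT
  refine ⟨B *ᵥ w, ⟨w, rfl⟩, ?_⟩
  convert hzface using 1
  funext i
  exact RingHom.map_mulVec (Int.castRingHom ℝ) B w i

/-- if `L` is unimodular, every closed face of `H_L` is a lattice translate of a
standard box `{x ∈ ℝL : -b_i ≤ x_i ≤ a_i}` with `a, b ∈ {0,1}^n` of disjoint supports. -/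
theorem closedFace_eq_lattice_translate_of_box
    {n : ℕ} (L : Submodule ℤ (Fin n → ℤ)) (hL : IsUnimodular L)
    (u : Fin n → ℝ) (hu : u ∈ realSpan L) :
    ∃ v ∈ L, ∃ a b : Fin n → ℤ,
      (∀ i, a i = 0 ∨ a i = 1) ∧ (∀ i, b i = 0 ∨ b i = 1) ∧
      (∀ i, a i = 0 ∨ b i = 0) ∧
      closedFace L u =
        (fun x => intCastVec v + x) ''
          {x | x ∈ realSpan L ∧ ∀ i, -(b i : ℝ) ≤ x i ∧ x i ≤ (a i : ℝ)} := by
  obtain ⟨v, hvL, hvW, hvbox⟩ := exists_mem_closedFace_of_isUnimodular hL hu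
  have hv : ∀ i, ⌊u i⌋ ≤ v i ∧ v i ≤ ⌈u i⌉ ∧ ⌈u i⌉ ≤ ⌊u i⌋ + 1 := fun i =>
    ⟨Int.cast_le.1 (hvbox i).1, Int.cast_le.1 (hvbox i).2, Int.ceil_le_floor_add_one _⟩
  refine ⟨v, hvL, fun i => ⌈u i⌉ - v i, fun i => v i - ⌊u i⌋, fun i => by grind,
    fun i => by grind, fun i => by grind, ?_⟩
  rw [image_add_left]
  ext x
  have hshift : -intCastVec v + x ∈ realSpan L ↔ x ∈ realSpan L :=
    Submodule.add_mem_iff_right _ (Submodule.neg_mem _ hvW)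
  simp only [closedFace, mem_ofPred_eq, mem_preimage, hshift, Pi.add_apply, Pi.neg_apply,
    intCastVec, Int.cast_sub]
  grind
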